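/- Let q ≥ 1 and let a = (k₁/q', (k₂−k₁)/q', …, (k_q−k_{q−1})/q') be a probability distribution on [q] with rational entries, where q' is a positive integer and 0 ≤ k₁ ≤ k₂ ≤ ⋯ ≤ k_q = q' are integers with all entries of a positive. Then for every symmetric q×q real matrix J there exists a symmetric q'×q' real matrix J' (obtained by blowing up row/column i of J into k_i − k_{i−1} copies) such that for every graphon W, the microcanonical ground state energy satisfies E_a(W,J) = E_b(W,J'), where b = (1/q', …, 1/q') is the uniform distribution on [q']. -/

import Mathlib

open MeasureTheory Filter

noncomputable section

/-- The unit interval as a subset of ℝ. -/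
def I01 : Set ℝ := Set.Icc 0 1

/-- A `q`-fractional partition: measurable functions `ρ i : [0,1] → [0,1]`
summing pointwise to `1` on `[0,1]`. -/
structure FracPartition (q : ℕ) where
  toFun : Fin q → ℝ → ℝ
  measurable : ∀ i, Measurable (toFun i)
  mem_I01 : ∀ i x, x ∈ I01 → toFun i x ∈ I01
  sum_one : ∀ x ∈ I01, ∑ i, toFun i x = 1

/-- Energy of a fractional partition with respect to a graphon `W` and matrix `J`. -/
def energy {q : ℕ} (W : ℝ → ℝ → ℝ) (J : Matrix (Fin q) (Fin q) ℝ)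
    (ρ : FracPartition q) : ℝ :=
  - ∑ i, ∑ j, J i j * ∫ x in I01, ∫ y in I01, ρ.toFun i x * ρ.toFun j y * W x y

/-- `a` is a probability distribution on `Fin q`. -/
def IsDist {q : ℕ} (a : Fin q → ℝ) : Prop :=
  (∀ i, 0 ≤ a i) ∧ ∑ i, a i = 1

/-- Microcanonical ground state energy. -/
def mgse {q : ℕ} (W : ℝ → ℝ → ℝ) (J : Matrix (Fin q) (Fin q) ℝ) (a : Fin q → ℝ) : ℝ :=
  sInf {e | ∃ ρ : FracPartition q, (∀ i, (∫ x in I01, ρ.toFun i x) = a i) ∧ e = energy W J ρ}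

/-- General lower threshold ground state energy with threshold vector `x`. -/
def ltgseV {q : ℕ} (W : ℝ → ℝ → ℝ) (J : Matrix (Fin q) (Fin q) ℝ) (x : Fin q → ℝ) : ℝ :=
  sInf {e | ∃ a : Fin q → ℝ, IsDist a ∧ (∀ i, x i ≤ a i) ∧ e = mgse W J a}

/-- Homogeneous lower threshold ground state energy with scalar threshold `c`. -/
def ltgse {q : ℕ} (W : ℝ → ℝ → ℝ) (J : Matrix (Fin q) (Fin q) ℝ) (c : ℝ) : ℝ :=
  ltgseV W J (fun _ => c)

/-- Unrestricted ground state energy. -/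
def gse {q : ℕ} (W : ℝ → ℝ → ℝ) (J : Matrix (Fin q) (Fin q) ℝ) : ℝ :=
  sInf {e | ∃ ρ : FracPartition q, e = energy W J ρ}

/-- `W` is a graphon: a bounded symmetric measurable function. -/
def IsGraphon (W : ℝ → ℝ → ℝ) : Prop :=
  Measurable (Function.uncurry W) ∧ (∀ x y, W x y = W y x) ∧ ∃ M, ∀ x y, |W x y| ≤ M

/-!
Fractional partitions may take fractional values, so blowing up class `i` into `m_i` copies
costs nothing: a `q`-partition `ρ` with `∫ ρ_i = a_i` splits into `ρ_i / m_i` on each copy of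
`i`, which has mass `a_i / m_i = 1 / q'`, and conversely summing the copies of a
`q'`-partition merges it back into a `q`-partition. Since the energy is bilinear in the
partition, merging turns the energy with respect to `J` into the energy with respect to the
blown-up matrix `J' u v = J (σ u) (σ v)`, where `σ` sends each copy to its class; hence both
infima range over the same set of energies.
-/

open Finset Function

lemma measurableSet_I01 : MeasurableSet I01 := measurableSet_Icc

lemma volume_I01 : volume I01 = 1 := by simp [I01]

instance : IsFiniteMeasure (volume.restrict I01) :=
  ⟨by simp [volume_I01]⟩

lemma integrableOn_I01_of_abs_le {f : ℝ → ℝ} (hf : Measurable f) {C : ℝ}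
    (hC : ∀ x ∈ I01, |f x| ≤ C) : IntegrableOn f I01 :=
  Integrable.of_bound hf.aestronglyMeasurable C (ae_restrict_of_forall_mem measurableSet_I01 hC)

section Kernel

variable {F : ℝ → ℝ → ℝ} {C : ℝ}

lemma integrableOn_section_of_abs_le (hF : Measurable (uncurry F))
    (hC : ∀ x ∈ I01, ∀ y ∈ I01, |F x y| ≤ C) {x : ℝ} (hx : x ∈ I01) :
    IntegrableOn (F x) I01 :=
  integrableOn_I01_of_abs_le (hF.comp measurable_prodMk_left) (hC x hx)

lemma integrableOn_integral_of_abs_le (hF : Measurable (uncurry F))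
    (hC : ∀ x ∈ I01, ∀ y ∈ I01, |F x y| ≤ C) :
    IntegrableOn (fun x => ∫ y in I01, F x y) I01 := by
  refine integrableOn_I01_of_abs_le
    (hF.stronglyMeasurable.integral_prod_right (ν := volume.restrict I01)).measurable
    (C := C) fun x hx => ?_
  simpa [Measure.real, volume_I01] using
    norm_setIntegral_le_of_norm_le_const (μ := volume) (f := F x) (by simp [volume_I01]) (hC x hx)

end Kernel

lemma integral_sum_mul_sum_mul_kernel {W : ℝ → ℝ → ℝ} (hW : Measurable (uncurry W))
    {M : ℝ} (hWM : ∀ x y, |W x y| ≤ M) {ι κ : Type*} (s : Finset ι) (t : Finset κ)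
    {f : ι → ℝ → ℝ} {g : κ → ℝ → ℝ} (hf : ∀ u, Measurable (f u)) (hg : ∀ v, Measurable (g v))
    (hf1 : ∀ u, ∀ x ∈ I01, |f u x| ≤ 1) (hg1 : ∀ v, ∀ y ∈ I01, |g v y| ≤ 1) :
    ∫ x in I01, ∫ y in I01, (∑ u ∈ s, f u x) * (∑ v ∈ t, g v y) * W x y =
      ∑ u ∈ s, ∑ v ∈ t, ∫ x in I01, ∫ y in I01, f u x * g v y * W x y := by
  have hF : ∀ u v, Measurable (uncurry fun x y => f u x * g v y * W x y) := fun u v =>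
    (((hf u).comp measurable_fst).mul ((hg v).comp measurable_snd)).mul hW
  have hFM : ∀ u v, ∀ x ∈ I01, ∀ y ∈ I01, |f u x * g v y * W x y| ≤ M :=
    fun u v x hx y hy => by
      rw [abs_mul, abs_mul]
      exact (mul_le_of_le_one_left (abs_nonneg _)
        (mul_le_one₀ (hf1 u x hx) (abs_nonneg _) (hg1 v y hy))).trans (hWM x y)
  calc ∫ x in I01, ∫ y in I01, (∑ u ∈ s, f u x) * (∑ v ∈ t, g v y) * W x y
      = ∫ x in I01, ∑ u ∈ s, ∑ v ∈ t, ∫ y in I01, f u x * g v y * W x y := by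
        refine setIntegral_congr_fun measurableSet_I01 fun x hx => ?_
        simp_rw [sum_mul_sum, sum_mul]
        rw [integral_finsetSum _ fun u _ =>
          integrable_finsetSum _ fun v _ => integrableOn_section_of_abs_le (hF u v) (hFM u v) hx]
        exact sum_congr rfl fun u _ =>
          integral_finsetSum _ fun v _ => integrableOn_section_of_abs_le (hF u v) (hFM u v) hx
    _ = ∑ u ∈ s, ∑ v ∈ t, ∫ x in I01, ∫ y in I01, f u x * g v y * W x y := by
        rw [integral_finsetSum _ fun u _ =>
          integrable_finsetSum _ fun v _ => integrableOn_integral_of_abs_le (hF u v) (hFM u v)]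
        exact sum_congr rfl fun u _ =>
          integral_finsetSum _ fun v _ => integrableOn_integral_of_abs_le (hF u v) (hFM u v)

lemma Finset.sum_fiberwise_apply {ι κ M : Type*} [Fintype ι] [Fintype κ] [DecidableEq κ]
    [AddCommMonoid M] (σ : ι → κ) (f : κ → ι → M) :
    ∑ j, ∑ u with σ u = j, f j u = ∑ u, f (σ u) u := by
  rw [← sum_fiberwise univ σ fun u => f (σ u) u]
  exact sum_congr rfl fun j _ => sum_congr rfl fun u hu => by rw [(mem_filter.1 hu).2]

lemma sum_fiber_div_card {ι κ : Type*} [Fintype ι] [DecidableEq κ] {σ : ι → κ}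
    (hσ : Surjective σ) (c : κ → ℝ) (i : κ) :
    ∑ u with σ u = i, c (σ u) / #{v | σ v = σ u} = c i := by
  have hcard : (#{v | σ v = i} : ℝ) ≠ 0 := by
    obtain ⟨u, hu⟩ := hσ i
    exact Nat.cast_ne_zero.2 (card_ne_zero.2 ⟨u, by simp [hu]⟩)
  rw [sum_congr rfl fun u hu => by rw [(mem_filter.1 hu).2], sum_const, nsmul_eq_mul,
    mul_div_cancel₀ _ hcard]

namespace FracPartition

variable {q q' : ℕ}

lemma abs_toFun_le_one (ρ : FracPartition q) (i : Fin q) {x : ℝ} (hx : x ∈ I01) :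
    |ρ.toFun i x| ≤ 1 := by
  rw [abs_of_nonneg (ρ.mem_I01 i x hx).1]
  exact (ρ.mem_I01 i x hx).2

lemma integrableOn_toFun (ρ : FracPartition q) (i : Fin q) : IntegrableOn (ρ.toFun i) I01 :=
  integrableOn_I01_of_abs_le (ρ.measurable i) fun _ => ρ.abs_toFun_le_one i

def merge (σ : Fin q' → Fin q) (ρ : FracPartition q') : FracPartition q where
  toFun i x := ∑ u with σ u = i, ρ.toFun u x
  measurable i := Finset.measurable_sum _ fun u _ => ρ.measurable u
  mem_I01 i x hx :=
    ⟨sum_nonneg fun u _ => (ρ.mem_I01 u x hx).1,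
      (sum_le_sum_of_subset_of_nonneg (subset_univ _) fun u _ _ => (ρ.mem_I01 u x hx).1).trans
        (ρ.sum_one x hx).le⟩
  sum_one x hx := by rw [sum_fiberwise univ σ fun u => ρ.toFun u x, ρ.sum_one x hx]

def split (σ : Fin q' → Fin q) (hσ : Surjective σ) (ρ : FracPartition q) : FracPartition q' where
  toFun u x := ρ.toFun (σ u) x / #{v | σ v = σ u}
  measurable u := (ρ.measurable (σ u)).div_const _
  mem_I01 u x hx :=
    ⟨div_nonneg (ρ.mem_I01 _ x hx).1 (Nat.cast_nonneg _),
      (div_le_self (ρ.mem_I01 _ x hx).1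
        (Nat.one_le_cast.2 (card_pos.2 ⟨u, by simp⟩))).trans (ρ.mem_I01 _ x hx).2⟩
  sum_one x hx := by
    rw [← sum_fiberwise univ σ]
    simp only [sum_fiber_div_card hσ fun i => ρ.toFun i x]
    exact ρ.sum_one x hx

variable {σ : Fin q' → Fin q}

lemma merge_split (hσ : Surjective σ) (ρ : FracPartition q) : merge σ (split σ hσ ρ) = ρ := by
  obtain ⟨toFun, _, _, _⟩ := ρ
  simp only [merge, split, mk.injEq]
  exact funext fun i => funext fun x => sum_fiber_div_card hσ (fun j => toFun j x) i

lemma integral_merge (ρ : FracPartition q') (i : Fin q) :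
    ∫ x in I01, (merge σ ρ).toFun i x = ∑ u with σ u = i, ∫ x in I01, ρ.toFun u x :=
  integral_finsetSum {u | σ u = i} fun u _ => ρ.integrableOn_toFun u

lemma integral_split (hσ : Surjective σ) (ρ : FracPartition q) (u : Fin q') :
    ∫ x in I01, (split σ hσ ρ).toFun u x =
      (∫ x in I01, ρ.toFun (σ u) x) / #{v | σ v = σ u} :=
  integral_div _ _

lemma energy_merge {W : ℝ → ℝ → ℝ} (hW : Measurable (uncurry W)) {M : ℝ}
    (hWM : ∀ x y, |W x y| ≤ M) (J : Matrix (Fin q) (Fin q) ℝ) (ρ : FracPartition q') :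
    energy W J (merge σ ρ) = energy W (J.submatrix σ σ) ρ := by
  simp only [energy, merge, Matrix.submatrix_apply, neg_inj]
  calc ∑ i, ∑ j, J i j * ∫ x in I01, ∫ y in I01,
        (∑ u with σ u = i, ρ.toFun u x) * (∑ v with σ v = j, ρ.toFun v y) * W x y
      = ∑ i, ∑ u with σ u = i, ∑ j, ∑ v with σ v = j,
          J i j * ∫ x in I01, ∫ y in I01, ρ.toFun u x * ρ.toFun v y * W x y := by
        refine sum_congr rfl fun i _ => ?_
        rw [sum_comm]
        refine sum_congr rfl fun j _ => ?_
        rw [integral_sum_mul_sum_mul_kernel hW hWM _ _ ρ.measurable ρ.measurable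
          (fun u _ => ρ.abs_toFun_le_one u) (fun v _ => ρ.abs_toFun_le_one v), mul_sum]
        simp_rw [mul_sum]
    _ = _ := by simp_rw [sum_fiberwise_apply]

end FracPartition

theorem mgse_eq_mgse_submatrix {q q' : ℕ} {W : ℝ → ℝ → ℝ} (hW : Measurable (uncurry W))
    {M : ℝ} (hWM : ∀ x y, |W x y| ≤ M) {σ : Fin q' → Fin q} (hσ : Surjective σ)
    (J : Matrix (Fin q) (Fin q) ℝ) (a : Fin q → ℝ) :
    mgse W J a = mgse W (J.submatrix σ σ) fun u => a (σ u) / #{v | σ v = σ u} := by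
  unfold mgse
  congr 1
  ext e
  constructor
  · rintro ⟨ρ, hρ, rfl⟩
    refine ⟨.split σ hσ ρ, fun u => by rw [FracPartition.integral_split, hρ], ?_⟩
    rw [← FracPartition.energy_merge hW hWM, FracPartition.merge_split]
  · rintro ⟨ρ, hρ, rfl⟩
    refine ⟨.merge σ ρ, fun i => ?_, (FracPartition.energy_merge hW hWM J ρ).symm⟩
    simp only [FracPartition.integral_merge, hρ]
    exact sum_fiber_div_card hσ a i

lemma Fin.card_filter_val_mem_Ico {n A B : ℕ} (hB : B ≤ n) :
    #{u : Fin n | A ≤ (u : ℕ) ∧ (u : ℕ) < B} = B - A := by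
  rw [← Nat.card_Ico A B, ← card_map Fin.valEmbedding]
  congr 1
  ext x
  simp only [Finset.mem_map, mem_filter, mem_univ, true_and, Fin.valEmbedding_apply, mem_Ico]
  exact ⟨fun ⟨u, hu, hux⟩ => hux ▸ hu, fun hx => ⟨⟨x, by omega⟩, hx, rfl⟩⟩

lemma exists_castSucc_le_lt_succ {q : ℕ} {k : Fin (q + 1) → ℕ} (hk0 : k 0 = 0) {u : ℕ}
    (hu : u < k (Fin.last q)) : ∃ i : Fin q, k i.castSucc ≤ u ∧ u < k i.succ := by
  suffices ∀ j : Fin (q + 1), u < k j → ∃ i : Fin q, k i.castSucc ≤ u ∧ u < k i.succ from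
    this _ hu
  intro j
  induction j using Fin.induction with
  | zero => simp [hk0]
  | succ i ih =>
    intro hi
    by_cases h : k i.castSucc ≤ u
    exacts [⟨i, h, hi⟩, ih (not_le.1 h)]

lemma le_of_castSucc_le_lt_succ {q : ℕ} {k : Fin (q + 1) → ℕ} (hk : Monotone k) {u : ℕ}
    {i j : Fin q} (hi : u < k i.succ) (hj : k j.castSucc ≤ u) : j ≤ i := by
  by_contra! hij
  have := hk (Fin.succ_le_castSucc_iff.2 hij)
  omega

lemma exists_blockIndex {q : ℕ} {k : Fin (q + 1) → ℕ} (hk0 : k 0 = 0) (hk : Monotone k) :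
    ∃ σ : Fin (k (Fin.last q)) → Fin q,
      ∀ u i, σ u = i ↔ k i.castSucc ≤ (u : ℕ) ∧ (u : ℕ) < k i.succ := by
  choose σ hσ using fun u : Fin (k (Fin.last q)) => exists_castSucc_le_lt_succ hk0 u.isLt
  refine ⟨σ, fun u i => ⟨fun h => h ▸ hσ u, fun ⟨h₁, h₂⟩ => ?_⟩⟩
  exact le_antisymm (le_of_castSucc_le_lt_succ hk h₂ (hσ u).1)
    (le_of_castSucc_le_lt_succ hk (hσ u).2 h₁)

theorem stmt0_general (q q' : ℕ)
    (k : Fin (q + 1) → ℕ) (hk0 : k 0 = 0) (hklast : k (Fin.last q) = q')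
    (hkmono : Monotone k)
    (a : Fin q → ℝ) (ha : ∀ i, a i = ((k i.succ : ℝ) - (k i.castSucc : ℝ)) / q')
    (hapos : ∀ i, 0 < a i)
    (J : Matrix (Fin q) (Fin q) ℝ) (hJ : J.IsSymm) :
    ∃ J' : Matrix (Fin q') (Fin q') ℝ, J'.IsSymm ∧
      (∀ (u v : Fin q') (i j : Fin q),
        k i.castSucc ≤ (u : ℕ) → (u : ℕ) < k i.succ →
        k j.castSucc ≤ (v : ℕ) → (v : ℕ) < k j.succ → J' u v = J i j) ∧
      ∀ W : ℝ → ℝ → ℝ, IsGraphon W →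
        mgse W J a = mgse W J' (fun _ => (q' : ℝ)⁻¹) := by
  subst hklast
  obtain ⟨σ, hσ⟩ := exists_blockIndex hk0 hkmono
  have hk_lt (i : Fin q) : k i.castSucc < k i.succ := by
    by_contra! h
    refine (hapos i).not_ge ?_
    rw [ha]
    exact div_nonpos_of_nonpos_of_nonneg (sub_nonpos.2 (by exact_mod_cast h)) (Nat.cast_nonneg _)
  have hfiber (i : Fin q) : #{u | σ u = i} = k i.succ - k i.castSucc := by
    simp_rw [hσ]
    exact Fin.card_filter_val_mem_Ico (hkmono (Fin.le_last _))
  have hsurj : Surjective σ := fun i =>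
    ⟨⟨k i.castSucc, (hk_lt i).trans_le (hkmono (Fin.le_last _))⟩, (hσ _ _).2 ⟨le_rfl, hk_lt i⟩⟩
  refine ⟨J.submatrix σ σ, hJ.submatrix σ, fun u v i j h₁ h₂ h₃ h₄ => by
    rw [Matrix.submatrix_apply, (hσ u i).2 ⟨h₁, h₂⟩, (hσ v j).2 ⟨h₃, h₄⟩],
    fun W ⟨hW, _, M, hWM⟩ => ?_⟩
  rw [mgse_eq_mgse_submatrix hW hWM hsurj]
  congr 1
  funext u
  rw [hfiber, ha, Nat.cast_sub (hk_lt _).le, div_div_cancel_left']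
  exact sub_ne_zero.2 (by exact_mod_cast (hk_lt _).ne')

theorem stmt0 (q q' : ℕ) (hq : 1 ≤ q) (hq' : 0 < q')
    (k : Fin (q + 1) → ℕ) (hk0 : k 0 = 0) (hklast : k (Fin.last q) = q')
    (hkmono : Monotone k)
    (a : Fin q → ℝ) (ha : ∀ i, a i = ((k i.succ : ℝ) - (k i.castSucc : ℝ)) / q')
    (hapos : ∀ i, 0 < a i)
    (J : Matrix (Fin q) (Fin q) ℝ) (hJ : J.IsSymm) :
    ∃ J' : Matrix (Fin q') (Fin q') ℝ, J'.IsSymm ∧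
      (∀ (u v : Fin q') (i j : Fin q),
        k i.castSucc ≤ (u : ℕ) → (u : ℕ) < k i.succ →
        k j.castSucc ≤ (v : ℕ) → (v : ℕ) < k j.succ → J' u v = J i j) ∧
      ∀ W : ℝ → ℝ → ℝ, IsGraphon W →
        mgse W J a = mgse W J' (fun _ => (q' : ℝ)⁻¹) :=
  stmt0_general q q' k hk0 hklast hkmono a ha hapos J hJ
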